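/- arXiv:1609.04102 — 5 statements merged into one kernel-verified Lean document; each statement's English description precedes it below -/
import Mathlib

section
/- Let (Δᵢ)_{i≥0} be a sequence of sets of LTL formulas satisfying: (a) whenever X α ∈ Δᵢ then α ∈ Δᵢ₊₁, and (b) whenever α U β ∈ Δᵢ then either β ∈ Δᵢ or both α ∈ Δᵢ and X(α U β) ∈ Δᵢ, and (c) whenever X(α U β) ∈ Δᵢ then α U β ∈ Δᵢ₊₁. Then for any i with α U β ∈ Δᵢ, either there is some d ≥ i with β ∈ Δ_d and {α, α U β, X(α U β)} ⊆ Δ_f for all i ≤ f < d, or for all f ≥ i we have {α, α U β, X(α U β)} ⊆ Δ_f. -/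
/-- LTL formulas built from atoms by negation, conjunction, next and until. -/
inductive LTL (AP : Type) : Type
  | atom : AP → LTL AP
  | neg : LTL AP → LTL AP
  | and : LTL AP → LTL AP → LTL AP
  | next : LTL AP → LTL AP
  | until_ : LTL AP → LTL AP → LTL AP
  deriving DecidableEq

/-- A transition structure over state type `S`: serial relation `R` and labelling `g`. -/
structure TStruct (AP S : Type) where
  R : S → S → Prop
  serial : ∀ s, ∃ t, R s t
  g : S → Set AP

/-- The `j`-fold shift `σ≥j` of a path. -/
def shift {S : Type} (σ : ℕ → S) (j : ℕ) : ℕ → S := fun i => σ (i + j)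

/-- `σ` is a fullpath through `M`. -/
def Fullpath {AP S : Type} (M : TStruct AP S) (σ : ℕ → S) : Prop :=
  ∀ i, M.R (σ i) (σ (i + 1))

/-- Standard LTL satisfaction. -/
def Sat {AP S : Type} (M : TStruct AP S) : (ℕ → S) → LTL AP → Prop
  | σ, .atom p => p ∈ M.g (σ 0)
  | σ, .neg α => ¬ Sat M σ α
  | σ, .and α β => Sat M σ α ∧ Sat M σ β
  | σ, .next α => Sat M (shift σ 1) α
  | σ, .until_ α β => ∃ i, Sat M (shift σ i) β ∧ ∀ j < i, Sat M (shift σ j) α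

/-! Consider the first index `d ≥ i` at which the triple `{α, α U β, X(α U β)}` fails to be in `Δ d`,
if there is one. Condition (c) carries `α U β` from index `d - 1` to `d`, and then condition (b)
forces `β ∈ Δ d`. -/

theorem fulfilled_or_forall_deferred {pending fulfilled deferred : ℕ → Prop}
    (hstep : ∀ j, pending j → fulfilled j ∨ deferred j)
    (hnext : ∀ j, deferred j → pending (j + 1)) {i : ℕ} (hi : pending i) :
    (∃ d, i ≤ d ∧ fulfilled d ∧ ∀ f, i ≤ f → f < d → deferred f) ∨
      ∀ f, i ≤ f → deferred f := by
  classical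
  by_cases hall : ∀ f, i ≤ f → deferred f
  · exact Or.inr hall
  push Not at hall
  obtain ⟨hid, hd⟩ := Nat.find_spec hall
  have hbefore : ∀ f, i ≤ f → f < Nat.find hall → deferred f := fun f hif hfd => by
    by_contra hf
    exact Nat.find_min hall hfd ⟨hif, hf⟩
  have hpending : pending (Nat.find hall) := by
    rcases hid.eq_or_lt with heq | hlt
    · exact heq ▸ hi
    · obtain ⟨k, hk⟩ := Nat.exists_eq_add_of_lt hlt
      exact hk ▸ hnext (i + k) (hbefore _ (by omega) (by omega))
  exact Or.inl ⟨_, hid, (hstep _ hpending).resolve_right hd, hbefore⟩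

theorem until_propagation_general {AP : Type} (Δ : ℕ → Set (LTL AP))
    (hb : ∀ i (α β : LTL AP), LTL.until_ α β ∈ Δ i →
      β ∈ Δ i ∨ (α ∈ Δ i ∧ LTL.next (LTL.until_ α β) ∈ Δ i))
    (hc : ∀ i (α β : LTL AP), LTL.next (LTL.until_ α β) ∈ Δ i →
      LTL.until_ α β ∈ Δ (i + 1))
    (α β : LTL AP) (i : ℕ) (h : LTL.until_ α β ∈ Δ i) :
    (∃ d, i ≤ d ∧ β ∈ Δ d ∧ ∀ f, i ≤ f → f < d →
        α ∈ Δ f ∧ LTL.until_ α β ∈ Δ f ∧ LTL.next (LTL.until_ α β) ∈ Δ f) ∨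
    (∀ f, i ≤ f → α ∈ Δ f ∧ LTL.until_ α β ∈ Δ f ∧ LTL.next (LTL.until_ α β) ∈ Δ f) := by
  have hstep : ∀ j, LTL.until_ α β ∈ Δ j → β ∈ Δ j ∨
      (α ∈ Δ j ∧ LTL.until_ α β ∈ Δ j ∧ LTL.next (LTL.until_ α β) ∈ Δ j) := fun j hj =>
    (hb j α β hj).imp_right fun ⟨hα, hX⟩ => ⟨hα, hj, hX⟩
  exact fulfilled_or_forall_deferred hstep (fun j hj => hc j α β hj.2.2) h

/-- propagation of until formulas along a sequence of label sets. -/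
theorem until_propagation {AP : Type} (Δ : ℕ → Set (LTL AP))
    (ha : ∀ i (α : LTL AP), LTL.next α ∈ Δ i → α ∈ Δ (i + 1))
    (hb : ∀ i (α β : LTL AP), LTL.until_ α β ∈ Δ i →
      β ∈ Δ i ∨ (α ∈ Δ i ∧ LTL.next (LTL.until_ α β) ∈ Δ i))
    (hc : ∀ i (α β : LTL AP), LTL.next (LTL.until_ α β) ∈ Δ i →
      LTL.until_ α β ∈ Δ (i + 1))
    (α β : LTL AP) (i : ℕ) (h : LTL.until_ α β ∈ Δ i) :
    (∃ d, i ≤ d ∧ β ∈ Δ d ∧ ∀ f, i ≤ f → f < d →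
        α ∈ Δ f ∧ LTL.until_ α β ∈ Δ f ∧ LTL.next (LTL.until_ α β) ∈ Δ f) ∨
    (∀ f, i ≤ f → α ∈ Δ f ∧ LTL.until_ α β ∈ Δ f ∧ LTL.next (LTL.until_ α β) ∈ Δ f) :=
  until_propagation_general Δ hb hc α β i h
end

section
/- Let (Δᵢ)_{i≥0} satisfy: whenever ¬(α U β) ∈ Δᵢ then either both ¬α, ¬β ∈ Δᵢ, or both ¬β, X¬(α U β) ∈ Δᵢ; and whenever X¬(α U β) ∈ Δᵢ then ¬(α U β) ∈ Δᵢ₊₁. Then if ¬(α U β) ∈ Δᵢ, either (1) there is some d ≥ i with ¬α, ¬β ∈ Δ_d and {¬β, ¬(α U β), X¬(α U β)} ⊆ Δ_f for all i ≤ f < d, or (2) for all d ≥ i, {¬β, ¬(α U β), X¬(α U β)} ⊆ Δ_d. -/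
/-! Along the sequence, `¬(α U β)` is handed on from `Δₙ` to `Δₙ₊₁` for as long as the second
alternative `{¬β, X¬(α U β)}` is chosen. So either that alternative is chosen forever, or at the first
index where it is not chosen `¬(α U β)` is still present and the first alternative `{¬α, ¬β}` must
hold there. -/

theorem Nat.forall_ge_or_exists_first_not (P : ℕ → Prop) (i : ℕ) :
    (∀ d, i ≤ d → P d) ∨ ∃ d, i ≤ d ∧ ¬P d ∧ ∀ f, i ≤ f → f < d → P f := by
  classical
  by_cases hall : ∀ d, i ≤ d → P d
  · exact Or.inl hall
  · push Not at hall
    refine Or.inr ⟨Nat.find hall, (Nat.find_spec hall).1, (Nat.find_spec hall).2, ?_⟩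
    intro f hif hfd
    by_contra hf
    exact Nat.find_min hall hfd ⟨hif, hf⟩

theorem exists_stop_or_forall_continue {N S C : ℕ → Prop}
    (hstep : ∀ n, N n → S n ∨ C n) (hC : ∀ n, C n → N (n + 1)) {i : ℕ} (hi : N i) :
    (∃ d, i ≤ d ∧ S d ∧ ∀ f, i ≤ f → f < d → C f) ∨ ∀ d, i ≤ d → C d := by
  rcases Nat.forall_ge_or_exists_first_not C i with hall | ⟨d, hid, hnot, hbelow⟩
  · exact Or.inr hall
  · have hNd : N d := by
      rcases hid.eq_or_lt with rfl | hlt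
      · exact hi
      · obtain ⟨e, rfl⟩ := Nat.exists_eq_add_one_of_ne_zero (Nat.ne_zero_of_lt hlt)
        exact hC e (hbelow e (Nat.le_of_lt_succ hlt) e.lt_succ_self)
    exact Or.inl ⟨d, hid, (hstep d hNd).resolve_right hnot, hbelow⟩

/-- propagation of negated until formulas along a sequence of label sets. -/
theorem neg_until_propagation {AP : Type} (Δ : ℕ → Set (LTL AP))
    (hb : ∀ i (α β : LTL AP), LTL.neg (LTL.until_ α β) ∈ Δ i →
      (LTL.neg α ∈ Δ i ∧ LTL.neg β ∈ Δ i) ∨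
      (LTL.neg β ∈ Δ i ∧ LTL.next (LTL.neg (LTL.until_ α β)) ∈ Δ i))
    (hc : ∀ i (α β : LTL AP), LTL.next (LTL.neg (LTL.until_ α β)) ∈ Δ i →
      LTL.neg (LTL.until_ α β) ∈ Δ (i + 1))
    (α β : LTL AP) (i : ℕ) (h : LTL.neg (LTL.until_ α β) ∈ Δ i) :
    (∃ d, i ≤ d ∧ LTL.neg α ∈ Δ d ∧ LTL.neg β ∈ Δ d ∧ ∀ f, i ≤ f → f < d →
        LTL.neg β ∈ Δ f ∧ LTL.neg (LTL.until_ α β) ∈ Δ f ∧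
          LTL.next (LTL.neg (LTL.until_ α β)) ∈ Δ f) ∨
    (∀ d, i ≤ d →
        LTL.neg β ∈ Δ d ∧ LTL.neg (LTL.until_ α β) ∈ Δ d ∧
          LTL.next (LTL.neg (LTL.until_ α β)) ∈ Δ d) := by
  have hstep : ∀ n, LTL.neg (LTL.until_ α β) ∈ Δ n →
      (LTL.neg α ∈ Δ n ∧ LTL.neg β ∈ Δ n) ∨
      (LTL.neg β ∈ Δ n ∧ LTL.neg (LTL.until_ α β) ∈ Δ n ∧
        LTL.next (LTL.neg (LTL.until_ α β)) ∈ Δ n) := fun n hn =>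
    (hb n α β hn).imp_right fun hcont => ⟨hcont.1, hn, hcont.2⟩
  rcases exists_stop_or_forall_continue hstep (fun n hn => hc n α β hn.2.2) h with
    ⟨d, hid, ⟨hα, hβ⟩, hbelow⟩ | hall
  · exact Or.inl ⟨d, hid, hα, hβ, hbelow⟩
  · exact Or.inr hall
end

section
/- Soundness of the ¬U-rule: if a fullpath σ satisfies every formula in Δ ∪ {¬(α U β)}, then either σ satisfies every formula in Δ ∪ {¬α, ¬β}, or σ satisfies every formula in Δ ∪ {¬β, X¬(α U β)}. -/
theorem shift_succ {S : Type} (σ : ℕ → S) (i : ℕ) :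
    shift σ (i + 1) = shift (shift σ 1) i := by
  funext n
  simp only [shift, Nat.add_assoc]

section Until

variable {AP S : Type} (M : TStruct AP S) {σ : ℕ → S} {α β : LTL AP}

theorem sat_until_of_sat_right (hβ : Sat M σ β) : Sat M σ (.until_ α β) :=
  ⟨0, hβ, fun _ hj => absurd hj (Nat.not_lt_zero _)⟩

theorem sat_until_of_sat_left_of_sat_next (hα : Sat M σ α)
    (hnext : Sat M σ (.next (.until_ α β))) : Sat M σ (.until_ α β) := by
  obtain ⟨i, hβ, hα'⟩ := hnext
  refine ⟨i + 1, shift_succ σ i ▸ hβ, fun j hj => ?_⟩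
  cases j with
  | zero => exact hα
  | succ k => exact shift_succ σ k ▸ hα' k (Nat.lt_of_succ_lt_succ hj)

end Until

theorem forall_mem_union_pair {T : Type*} {P : T → Prop} {Δ : Set T} {a b : T} :
    (∀ γ ∈ Δ ∪ {a, b}, P γ) ↔ (∀ γ ∈ Δ, P γ) ∧ P a ∧ P b := by
  simp only [Set.mem_union, Set.mem_insert_iff, Set.mem_singleton_iff, or_imp,
    forall_and, forall_eq]

theorem negU_rule_sound_general {AP S : Type} (M : TStruct AP S) (σ : ℕ → S)
    (Δ : Set (LTL AP)) (α β : LTL AP)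
    (h : ∀ γ ∈ Δ ∪ {LTL.neg (LTL.until_ α β)}, Sat M σ γ) :
    (∀ γ ∈ Δ ∪ {LTL.neg α, LTL.neg β}, Sat M σ γ) ∨
    (∀ γ ∈ Δ ∪ {LTL.neg β, LTL.next (LTL.neg (LTL.until_ α β))}, Sat M σ γ) := by
  have hΔ : ∀ γ ∈ Δ, Sat M σ γ := fun γ hγ => h γ (Or.inl hγ)
  have hnU : ¬ Sat M σ (.until_ α β) := h _ (Or.inr rfl)
  have hnβ : ¬ Sat M σ β := hnU ∘ sat_until_of_sat_right M
  rw [forall_mem_union_pair, forall_mem_union_pair]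
  by_cases hα : Sat M σ α
  · exact Or.inr ⟨hΔ, hnβ, hnU ∘ sat_until_of_sat_left_of_sat_next M hα⟩
  · exact Or.inl ⟨hΔ, hα, hnβ⟩

/-- soundness of the ¬U-rule. -/
theorem negU_rule_sound {AP S : Type} (M : TStruct AP S) (σ : ℕ → S)
    (hσ : Fullpath M σ) (Δ : Set (LTL AP)) (α β : LTL AP)
    (h : ∀ γ ∈ Δ ∪ {LTL.neg (LTL.until_ α β)}, Sat M σ γ) :
    (∀ γ ∈ Δ ∪ {LTL.neg α, LTL.neg β}, Sat M σ γ) ∨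
    (∀ γ ∈ Δ ∪ {LTL.neg β, LTL.next (LTL.neg (LTL.until_ α β))}, Sat M σ γ) :=
  negU_rule_sound_general M σ Δ α β h
end

section
/- Any finished tableau branch has finite length bounded in terms of the number K of possible labels: a sequence of poised-label occurrences along a branch in which no label occurs more than some fixed finite number of times (as enforced by the PRUNE rule, which forbids a label from recurring without progress on any of at most E eventualities) has length at most 2·(E+1)·K, where E is the number of X-eventualities in the closure set. Abstractly: if L is a finite set of size K, f : ℕ → L is a sequence, and there is a function m : ℕ → Fin (E+1) which is weakly monotone such that whenever f(i) = f(j) = f(k) with i < j < k and m(j) = m(k) we have a contradiction (no element of L appears three times within a level of m), then the domain of f is finite with size at most 2·(E+1)·K. -/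
/-! Pigeonhole on the pairs `(m i, f i)`: there are `(E + 1) * K` of them, and by the PRUNE
condition none is taken at three positions, so `n ≤ 2 * (E + 1) * K`. -/

theorem Finset.exists_lt_lt_of_two_lt_card {α : Type*} [LinearOrder α] {s : Finset α}
    (hs : 2 < s.card) : ∃ a ∈ s, ∃ b ∈ s, ∃ c ∈ s, a < b ∧ b < c := by
  obtain ⟨t, hts, ht⟩ := s.exists_subset_card_eq hs
  have mem (i : Fin 3) : t.orderEmbOfFin ht i ∈ s := hts (t.orderEmbOfFin_mem ht i)
  exact ⟨_, mem 0, _, mem 1, _, mem 2,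
    (t.orderEmbOfFin ht).strictMono (by decide), (t.orderEmbOfFin ht).strictMono (by decide)⟩

theorem Fintype.card_le_two_mul_card_of_no_eq_triple {α β : Type*} [LinearOrder α] [Fintype α]
    [Fintype β] (g : α → β) (h : ∀ i j k, i < j → j < k → g i = g j → g j = g k → False) :
    Fintype.card α ≤ 2 * Fintype.card β := by
  classical
  by_contra! hcard
  obtain ⟨y, hy⟩ := Fintype.exists_lt_card_fiber_of_mul_lt_card g (by rwa [mul_comm] at hcard)
  obtain ⟨i, hi, j, hj, k, hk, hij, hjk⟩ := Finset.exists_lt_lt_of_two_lt_card hy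
  simp only [Finset.mem_filter, Finset.mem_univ, true_and] at hi hj hk
  exact h i j k hij hjk (hi.trans hj.symm) (hj.trans hk.symm)

theorem prune_length_bound_general (L : Type) [Fintype L] (K E n : ℕ)
    (hK : Fintype.card L = K)
    (f : Fin n → L) (m : Fin n → Fin (E + 1))
    (h : ∀ i j k : Fin n, i < j → j < k → f i = f j → f j = f k → m j = m k → False) :
    n ≤ 2 * (E + 1) * K := by
  have := Fintype.card_le_two_mul_card_of_no_eq_triple (fun i => (m i, f i))
    fun i j k hij hjk hgij hgjk =>
      h i j k hij hjk (congrArg Prod.snd hgij) (congrArg Prod.snd hgjk) (congrArg Prod.fst hgjk)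
  simpa [Fintype.card_prod, hK, mul_assoc] using this

/-- a sequence over `K` labels with a weakly monotone progress level
in `{0,...,E}`, in which no label occurs at three positions `i < j < k` with the
same level at `j` and `k` (the PRUNE condition), has length at most `2·(E+1)·K`. -/
theorem prune_length_bound (L : Type) [Fintype L] (K E n : ℕ)
    (hK : Fintype.card L = K)
    (f : Fin n → L) (m : Fin n → Fin (E + 1)) (hm : Monotone m)
    (h : ∀ i j k : Fin n, i < j → j < k → f i = f j → f j = f k → m j = m k → False) :
    n ≤ 2 * (E + 1) * K :=
  prune_length_bound_general L K E n hK f m h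
end

section
/- Every satisfiable LTL formula has an ultimately periodic (lasso) model: if some fullpath in some structure satisfies φ, then there exist natural numbers N ≥ 0 and M ≥ 1 and a fullpath σ with σ_{i+M} = σ_i for all i ≥ N such that σ satisfies φ. -/
/-- A formula is satisfiable iff some fullpath through some finite structure satisfies it. -/
def Satisfiable {AP : Type} (φ : LTL AP) : Prop :=
  ∃ (S : Type) (_ : Fintype S) (M : TStruct AP S) (σ : ℕ → S),
    Fullpath M σ ∧ Sat M σ φ

/-- A formula is valid iff every fullpath through every finite structure satisfies it. -/
def Valid {AP : Type} (φ : LTL AP) : Prop :=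
  ∀ (S : Type) [Fintype S] (M : TStruct AP S) (σ : ℕ → S),
    Fullpath M σ → Sat M σ φ

namespace LTL

variable {AP : Type}

def subformulas : LTL AP → Set (LTL AP)
  | atom p => {atom p}
  | neg a => insert (neg a) a.subformulas
  | and a b => insert (and a b) (a.subformulas ∪ b.subformulas)
  | next a => insert (next a) a.subformulas
  | until_ a b => insert (until_ a b) (a.subformulas ∪ b.subformulas)

theorem mem_subformulas_self (φ : LTL AP) : φ ∈ φ.subformulas := by
  cases φ <;> simp [subformulas]

theorem subformulas_subset_of_mem {φ ψ : LTL AP} (h : ψ ∈ φ.subformulas) :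
    ψ.subformulas ⊆ φ.subformulas := by
  induction φ with
  | atom => rw [Set.mem_singleton_iff.1 h]
  | neg a ih | next a ih =>
    rcases h with rfl | h
    · rfl
    · exact (ih h).trans (Set.subset_insert _ _)
  | and a b iha ihb | until_ a b iha ihb =>
    rcases h with rfl | h | h
    · rfl
    · exact (iha h).trans (Set.subset_union_left.trans (Set.subset_insert _ _))
    · exact (ihb h).trans (Set.subset_union_right.trans (Set.subset_insert _ _))

theorem finite_subformulas (φ : LTL AP) : φ.subformulas.Finite := by
  induction φ <;> simp_all [subformulas]

end LTL

section Semantics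

variable {AP S : Type} {M : TStruct AP S}

@[simp]
theorem shift_shift (σ : ℕ → S) (i j : ℕ) : shift (shift σ i) j = shift σ (i + j) := by
  funext n
  simp only [shift, Nat.add_assoc, Nat.add_comm j i]

theorem sat_shift_until_iff {σ : ℕ → S} {i : ℕ} {a b : LTL AP} :
    Sat M (shift σ i) (.until_ a b) ↔
      ∃ k, Sat M (shift σ (i + k)) b ∧ ∀ j < k, Sat M (shift σ (i + j)) a := by
  simp [Sat]

theorem sat_until_iff {σ : ℕ → S} {a b : LTL AP} :
    Sat M σ (.until_ a b) ↔ Sat M σ b ∨ Sat M σ a ∧ Sat M (shift σ 1) (.until_ a b) := by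
  simp only [Sat, shift_shift]
  constructor
  · rintro ⟨_ | k, hb, ha⟩
    · exact Or.inl hb
    · exact Or.inr ⟨ha 0 k.succ_pos, k, by rwa [Nat.add_comm],
        fun j hj => by simpa [Nat.add_comm] using ha (j + 1) (by omega)⟩
  · rintro (hb | ⟨ha, k, hb, ha'⟩)
    · exact ⟨0, hb, nofun⟩
    · refine ⟨k + 1, by rwa [Nat.add_comm], fun j hj => ?_⟩
      rcases j with _ | j
      · exact ha
      · simpa [Nat.add_comm] using ha' j (by omega)

theorem sat_shift_until_of_le {σ : ℕ → S} {i k r : ℕ} {a b : LTL AP}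
    (hb : Sat M (shift σ (i + k)) b) (ha : ∀ j < k, Sat M (shift σ (i + j)) a) (hr : r ≤ k) :
    Sat M (shift σ (i + r)) (.until_ a b) :=
  sat_shift_until_iff.2 ⟨k - r, by rwa [Nat.add_assoc, Nat.add_sub_cancel' hr],
    fun j hj => by simpa [Nat.add_assoc] using ha (r + j) (by omega)⟩

end Semantics

section Hintikka

variable {AP S : Type}

structure IsHintikka (M : TStruct AP S) (Φ : Set (LTL AP)) (τ : ℕ → S)
    (L : ℕ → LTL AP → Prop) : Prop where
  atom : ∀ i p, .atom p ∈ Φ → (L i (.atom p) ↔ p ∈ M.g (τ i))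
  neg : ∀ i a, .neg a ∈ Φ → (L i (.neg a) ↔ ¬ L i a)
  and : ∀ i a b, .and a b ∈ Φ → (L i (.and a b) ↔ L i a ∧ L i b)
  next : ∀ i a, .next a ∈ Φ → (L i (.next a) ↔ L (i + 1) a)
  until_ : ∀ i a b, .until_ a b ∈ Φ →
    (L i (.until_ a b) ↔ L i b ∨ L i a ∧ L (i + 1) (.until_ a b))
  fulfil : ∀ i a b, .until_ a b ∈ Φ → L i (.until_ a b) → ∃ j ≥ i, L j b

namespace IsHintikka

variable {M : TStruct AP S} {Φ : Set (LTL AP)} {τ : ℕ → S} {L : ℕ → LTL AP → Prop}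

theorem until_iff_sat (hL : IsHintikka M Φ τ L) {a b : LTL AP} (hU : .until_ a b ∈ Φ)
    (ha : ∀ i, L i a ↔ Sat M (shift τ i) a) (hb : ∀ i, L i b ↔ Sat M (shift τ i) b) (i : ℕ) :
    L i (.until_ a b) ↔ Sat M (shift τ i) (.until_ a b) := by
  constructor
  · intro hLU
    obtain ⟨j, hij, hbj⟩ := hL.fulfil i a b hU hLU
    obtain ⟨k, rfl⟩ := Nat.exists_eq_add_of_le hij
    clear hij
    induction k generalizing i with
    | zero => exact sat_until_iff.2 (Or.inl ((hb i).1 hbj))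
    | succ k ih =>
      rw [sat_until_iff, shift_shift]
      rcases (hL.until_ i a b hU).1 hLU with hbi | ⟨hai, hLU'⟩
      · exact Or.inl ((hb i).1 hbi)
      · exact Or.inr ⟨(ha i).1 hai, ih (i + 1) hLU' (by rwa [Nat.add_right_comm])⟩
  · intro hSU
    obtain ⟨k, hbk, hak⟩ := sat_shift_until_iff.1 hSU
    clear hSU
    induction k generalizing i with
    | zero => exact (hL.until_ i a b hU).2 (Or.inl ((hb i).2 hbk))
    | succ k ih =>
      refine (hL.until_ i a b hU).2 (Or.inr ⟨(ha i).2 (hak 0 k.succ_pos), ih (i + 1) ?_ ?_⟩)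
      · rwa [Nat.add_right_comm]
      · intro j hj
        simpa [Nat.add_assoc, Nat.add_comm 1] using hak (j + 1) (by omega)

theorem iff_sat (hL : IsHintikka M Φ τ L) :
    ∀ {ψ : LTL AP}, ψ.subformulas ⊆ Φ → ∀ i, (L i ψ ↔ Sat M (shift τ i) ψ)
  | .atom p, h, i => by
    simpa [Sat, shift] using hL.atom i p (h (LTL.mem_subformulas_self _))
  | .neg a, h, i => by
    rw [LTL.subformulas, Set.insert_subset_iff] at h
    exact (hL.neg i a h.1).trans (not_congr (hL.iff_sat h.2 i))
  | .and a b, h, i => by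
    rw [LTL.subformulas, Set.insert_subset_iff, Set.union_subset_iff] at h
    exact (hL.and i a b h.1).trans (and_congr (hL.iff_sat h.2.1 i) (hL.iff_sat h.2.2 i))
  | .next a, h, i => by
    rw [LTL.subformulas, Set.insert_subset_iff] at h
    exact (hL.next i a h.1).trans ((hL.iff_sat h.2 (i + 1)).trans (by simp [Sat]))
  | .until_ a b, h, i => by
    rw [LTL.subformulas, Set.insert_subset_iff, Set.union_subset_iff] at h
    exact hL.until_iff_sat h.1 (hL.iff_sat h.2.1) (hL.iff_sat h.2.2) i

end IsHintikka

end Hintikka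

def lassoIndex (i₀ p n : ℕ) : ℕ := if n < i₀ then n else i₀ + (n - i₀) % p

section LassoIndex

variable {i₀ p : ℕ}

theorem lassoIndex_zero : lassoIndex i₀ p 0 = 0 := by
  unfold lassoIndex
  split_ifs with h
  · rfl
  · simp [Nat.eq_zero_of_not_pos h]

theorem lassoIndex_lt (hp : 0 < p) (n : ℕ) : lassoIndex i₀ p n < i₀ + p := by
  have := Nat.mod_lt (n - i₀) hp
  unfold lassoIndex
  split_ifs <;> omega

theorem lassoIndex_add_period {n : ℕ} (hn : i₀ ≤ n) :
    lassoIndex i₀ p (n + p) = lassoIndex i₀ p n := by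
  simp [lassoIndex, not_lt.2 hn, not_lt.2 (hn.trans (Nat.le_add_right n p)), Nat.sub_add_comm hn]

theorem lassoIndex_succ (hp : 0 < p) (n : ℕ) :
    lassoIndex i₀ p (n + 1) = lassoIndex i₀ p n + 1 ∨
      lassoIndex i₀ p n + 1 = i₀ + p ∧ lassoIndex i₀ p (n + 1) = i₀ := by
  unfold lassoIndex
  by_cases hn : n < i₀
  · left
    rw [if_pos hn]
    split_ifs
    · rfl
    · simp [show n + 1 = i₀ by omega]
  · rw [if_neg hn, if_neg (by omega), Nat.sub_add_comm (by omega), ← Nat.mod_add_mod]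
    have := Nat.mod_lt (n - i₀) hp
    by_cases hwrap : (n - i₀) % p + 1 = p
    · exact Or.inr ⟨by omega, by simp [hwrap]⟩
    · exact Or.inl (by rw [Nat.mod_eq_of_lt (by omega)]; rfl)

theorem lassoIndex_add (hp : 0 < p) {n k : ℕ} (h : lassoIndex i₀ p n + k < i₀ + p) :
    lassoIndex i₀ p (n + k) = lassoIndex i₀ p n + k := by
  induction k with
  | zero => rfl
  | succ k ih =>
    rw [← Nat.add_assoc]
    rcases lassoIndex_succ hp (n + k) with hs | ⟨hs, -⟩ <;> rw [ih (by omega)] at hs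
    · rw [hs, Nat.add_assoc]
    · omega

theorem exists_ge_lassoIndex_eq {k : ℕ} (hk : k < p) (n : ℕ) :
    ∃ m ≥ n, lassoIndex i₀ p m = i₀ + k := by
  refine ⟨i₀ + k + p * n, by nlinarith, ?_⟩
  simp [lassoIndex, Nat.add_assoc, Nat.mod_eq_of_lt hk]

end LassoIndex

section Lasso

variable {AP S : Type} {M : TStruct AP S} {σ : ℕ → S} {i₀ p : ℕ}

theorem Fullpath.comp_lassoIndex (hσ : Fullpath M σ) (hp : 0 < p) (hloop : σ (i₀ + p) = σ i₀) :
    Fullpath M (σ ∘ lassoIndex i₀ p) := by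
  intro n
  have := hσ (lassoIndex i₀ p n)
  rcases lassoIndex_succ hp n with h | ⟨h₁, h₂⟩
  · rwa [Function.comp_apply, Function.comp_apply, h]
  · rwa [Function.comp_apply, Function.comp_apply, h₂, ← hloop, ← h₁]

theorem sat_shift_lassoIndex_succ_iff (hp : 0 < p) {ψ : LTL AP}
    (hψ : Sat M (shift σ (i₀ + p)) ψ ↔ Sat M (shift σ i₀) ψ) (n : ℕ) :
    Sat M (shift σ (lassoIndex i₀ p n + 1)) ψ ↔ Sat M (shift σ (lassoIndex i₀ p (n + 1))) ψ := by
  rcases lassoIndex_succ hp n with h | ⟨h₁, h₂⟩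
  · rw [h]
  · rwa [h₁, h₂]

theorem exists_ge_sat_shift_lassoIndex (hp : 0 < p) {a b : LTL AP}
    (hagree : Sat M (shift σ (i₀ + p)) (.until_ a b) ↔ Sat M (shift σ i₀) (.until_ a b))
    (hfulfil : Sat M (shift σ i₀) (.until_ a b) → ∃ k < p, Sat M (shift σ (i₀ + k)) b)
    {n : ℕ} (hU : Sat M (shift σ (lassoIndex i₀ p n)) (.until_ a b)) :
    ∃ m ≥ n, Sat M (shift σ (lassoIndex i₀ p m)) b := by
  obtain ⟨k, hbk, hak⟩ := sat_shift_until_iff.1 hU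
  by_cases hk : lassoIndex i₀ p n + k < i₀ + p
  · exact ⟨n + k, by omega, by rwa [lassoIndex_add hp hk]⟩
  · -- The witness lies past the end of the loop, so `a U b` holds at `i₀ + p`, hence at `i₀`,
    -- where it is fulfilled inside the loop.
    have hend : Sat M (shift σ (i₀ + p)) (.until_ a b) := by
      have := sat_shift_until_of_le hbk hak (r := i₀ + p - lassoIndex i₀ p n) (by omega)
      rwa [Nat.add_sub_cancel' (lassoIndex_lt hp n).le] at this
    obtain ⟨k', hk', hbk'⟩ := hfulfil (hagree.1 hend)
    obtain ⟨m, hm, hfm⟩ := exists_ge_lassoIndex_eq (i₀ := i₀) hk' n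
    exact ⟨m, hm, by rwa [hfm]⟩

theorem isHintikka_lasso (hp : 0 < p) {φ : LTL AP}
    (hagree : ∀ ψ ∈ φ.subformulas, Sat M (shift σ (i₀ + p)) ψ ↔ Sat M (shift σ i₀) ψ)
    (hfulfil : ∀ a b, .until_ a b ∈ φ.subformulas → Sat M (shift σ i₀) (.until_ a b) →
      ∃ k < p, Sat M (shift σ (i₀ + k)) b) :
    IsHintikka M φ.subformulas (σ ∘ lassoIndex i₀ p)
      (fun n ψ => Sat M (shift σ (lassoIndex i₀ p n)) ψ) where
  atom _ _ _ := by simp [Sat, shift]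
  neg _ _ _ := Iff.rfl
  and _ _ _ _ := Iff.rfl
  next i a h := by
    have ha : a ∈ φ.subformulas := LTL.subformulas_subset_of_mem h (Or.inr a.mem_subformulas_self)
    simpa [Sat] using sat_shift_lassoIndex_succ_iff hp (hagree a ha) i
  until_ i a b h := by
    rw [sat_until_iff, shift_shift, sat_shift_lassoIndex_succ_iff hp (hagree _ h)]
  fulfil i a b h := exists_ge_sat_shift_lassoIndex hp (hagree _ h) (hfulfil a b h)

end Lasso

section Pigeonhole

open Filter

variable {AP S : Type} {M : TStruct AP S}

theorem eventually_until_witness_lt (σ : ℕ → S) (i : ℕ) {Φ : Set (LTL AP)} (hΦ : Φ.Finite) :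
    ∀ᶠ p in atTop, ∀ a b, .until_ a b ∈ Φ → Sat M (shift σ i) (.until_ a b) →
      ∃ k < p, Sat M (shift σ (i + k)) b := by
  have hU : {ab : LTL AP × LTL AP | .until_ ab.1 ab.2 ∈ Φ}.Finite :=
    hΦ.preimage fun x _ y _ h => Prod.ext (LTL.until_.inj h).1 (LTL.until_.inj h).2
  have hwit : ∀ ab : LTL AP × LTL AP, ∀ᶠ p in atTop,
      Sat M (shift σ i) (.until_ ab.1 ab.2) → ∃ k < p, Sat M (shift σ (i + k)) ab.2 := by
    intro ab
    by_cases h : Sat M (shift σ i) (.until_ ab.1 ab.2)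
    · obtain ⟨k, hk, -⟩ := sat_shift_until_iff.1 h
      filter_upwards [eventually_gt_atTop k] with p hp _ using ⟨k, hp, hk⟩
    · exact Eventually.of_forall fun _ h' => absurd h' h
  filter_upwards [hU.eventually_all.2 fun ab _ => hwit ab] with p hp a b hab using hp (a, b) hab

theorem exists_fulfilling_loop [Finite S] (σ : ℕ → S) {Φ : Set (LTL AP)} (hΦ : Φ.Finite) :
    ∃ i₀ p, 0 < p ∧ σ (i₀ + p) = σ i₀ ∧
      (∀ ψ ∈ Φ, Sat M (shift σ (i₀ + p)) ψ ↔ Sat M (shift σ i₀) ψ) ∧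
      ∀ a b, .until_ a b ∈ Φ → Sat M (shift σ i₀) (.until_ a b) →
        ∃ k < p, Sat M (shift σ (i₀ + k)) b := by
  have := hΦ.to_subtype
  let T : ℕ → S × (Φ → Prop) := fun i => (σ i, fun ψ => Sat M (shift σ i) ψ)
  obtain ⟨v, hv⟩ := Finite.exists_infinite_fiber T
  have hfreq : ∃ᶠ i in atTop, T i = v :=
    Nat.frequently_atTop_iff_infinite.2 (Set.infinite_coe_iff.1 hv)
  obtain ⟨i₀, hi₀⟩ := hfreq.exists
  obtain ⟨i₁, hi₁, hlt, hwit⟩ := (hfreq.and_eventually ((eventually_gt_atTop i₀).and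
    ((tendsto_sub_atTop_nat i₀).eventually (eventually_until_witness_lt σ i₀ hΦ)))).exists
  have hT : T (i₀ + (i₁ - i₀)) = T i₀ := by rw [Nat.add_sub_cancel' hlt.le, hi₀, hi₁]
  exact ⟨i₀, i₁ - i₀, by omega, congrArg Prod.fst hT,
    fun ψ hψ => iff_of_eq (congrFun (congrArg Prod.snd hT) ⟨ψ, hψ⟩), hwit⟩

end Pigeonhole

/-- every satisfiable LTL formula has an ultimately periodic (lasso) model. -/
theorem lasso_model_exists {AP : Type} (φ : LTL AP) (h : Satisfiable φ) :
    ∃ (S : Type) (_ : Fintype S) (M : TStruct AP S) (σ : ℕ → S) (N Mp : ℕ),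
      Fullpath M σ ∧ 1 ≤ Mp ∧ (∀ i, N ≤ i → σ (i + Mp) = σ i) ∧ Sat M σ φ := by
  obtain ⟨S, _, M, σ, hσ, hφ⟩ := h
  obtain ⟨i₀, p, hp, hloop, hagree, hfulfil⟩ :=
    exists_fulfilling_loop (M := M) σ φ.finite_subformulas
  refine ⟨S, ‹_›, M, σ ∘ lassoIndex i₀ p, i₀, p, hσ.comp_lassoIndex hp hloop, hp,
    fun n hn => congrArg σ (lassoIndex_add_period hn), ?_⟩
  have hsat := (isHintikka_lasso hp hagree hfulfil).iff_sat subset_rfl 0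
  rw [lassoIndex_zero] at hsat
  exact hsat.1 hφ
end
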